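/- arXiv:2505.05000 — 3 statements merged into one kernel-verified Lean document; each statement's English description precedes it below -/
import Mathlib

section
/- For any T > 0, x ≥ 1, and κ with 1 < κ < 2, and any θ ∈ [0, 3-κ], the integral ∫₀^T (1 - cos(xu))/u^κ du is bounded by C·x^{θ+κ-1}·T^θ for a constant C depending only on κ and θ. Concretely, if xT ≥ 1 then the integral is at most C·x^{κ-1} ≤ C·x^{κ-1}(xT)^θ, while if xT < 1 then the integral is at most C·x^{κ-1}(xT)^{3-κ} ≤ C·x^{κ-1}(xT)^θ. -/
open MeasureTheory Real


section AuxStmt1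
open intervalIntegral

lemma one_sub_cos_le' (t : ℝ) : 1 - Real.cos t ≤ t^2 / 2 := by
  have h1 : Real.sin (t/2)^2 ≤ (t/2)^2 := Real.sin_sq_le_sq
  have h2 : Real.sin (t/2)^2 + Real.cos (t/2)^2 = 1 := Real.sin_sq_add_cos_sq _
  have h3 : Real.cos (t/2)^2 = 1/2 + Real.cos (2*(t/2))/2 := Real.cos_sq _
  rw [show 2*(t/2) = t by ring] at h3
  nlinarith

lemma ptw1 (κ x : ℝ) (hκ1 : 1 < κ) (hκ2 : κ < 2) (hx : 0 < x) :
    ∀ u : ℝ, 0 ≤ u → (1 - Real.cos (x * u)) / u ^ κ ≤ x^2/2 * u ^ (2-κ) := by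
  intro u hu
  rcases eq_or_lt_of_le hu with h|h
  · simp [← h, Real.zero_rpow (by linarith : (2:ℝ)-κ ≠ 0),
      Real.zero_rpow (by positivity : κ ≠ 0)]
  · rw [div_le_iff₀ (Real.rpow_pos_of_pos h κ)]
    have h2 : x^2/2 * u ^ (2-κ) * u ^ κ = x^2/2 * u ^ (2:ℝ) := by
      rw [mul_assoc, ← Real.rpow_add h]; norm_num
    rw [h2, Real.rpow_two]
    calc 1 - Real.cos (x*u) ≤ (x*u)^2/2 := one_sub_cos_le' _
      _ = x^2/2 * u^2 := by ring

lemma f_nonneg (κ x u : ℝ) (hu : 0 ≤ u) : 0 ≤ (1 - Real.cos (x * u)) / u ^ κ := by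
  have : Real.cos (x*u) ≤ 1 := Real.cos_le_one _
  exact div_nonneg (by linarith) (Real.rpow_nonneg hu κ)

lemma f_int (κ x a : ℝ) (hκ1 : 1 < κ) (hκ2 : κ < 2) (hx : 0 < x) (ha : 0 ≤ a) :
    IntervalIntegrable (fun u => (1 - Real.cos (x * u)) / u ^ κ) volume 0 a := by
  have hg : IntervalIntegrable (fun u : ℝ => x^2/2 * u ^ (2-κ)) volume 0 a :=
    (intervalIntegral.intervalIntegrable_rpow' (by linarith)).const_mul _
  refine hg.mono_fun (Measurable.aestronglyMeasurable (by fun_prop)) ?_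
  filter_upwards [MeasureTheory.ae_restrict_mem measurableSet_uIoc] with u hu
  rw [Set.uIoc_of_le ha] at hu
  have hu0 : 0 ≤ u := hu.1.le
  rw [Real.norm_of_nonneg (f_nonneg κ x u hu0),
    Real.norm_of_nonneg (by positivity : (0:ℝ) ≤ x^2/2 * u ^ (2-κ))]
  exact ptw1 κ x hκ1 hκ2 hx u hu0

lemma int1 (κ c : ℝ) (hκ1 : 1 < κ) (hκ2 : κ < 2) (hc : 0 ≤ c) :
    ∫ u in (0:ℝ)..c, u ^ (2-κ) = c ^ (3-κ) / (3-κ) := by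
  rw [integral_rpow (Or.inl (by linarith))]
  rw [Real.zero_rpow (by intro h; linarith), show 2-κ+1 = 3-κ by ring]
  ring

theorem small_bound (κ x T : ℝ) (hκ1 : 1 < κ) (hκ2 : κ < 2) (hx : 0 < x) (hT : 0 ≤ T) :
    (∫ u in (0:ℝ)..T, (1 - Real.cos (x * u)) / u ^ κ)
      ≤ x^2/2 * (T ^ (3-κ) / (3-κ)) := by
  have h := intervalIntegral.integral_mono_on hT (f_int κ x T hκ1 hκ2 hx hT)
    ((intervalIntegral.intervalIntegrable_rpow' (by linarith)).const_mul _)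
    (fun u hu => ptw1 κ x hκ1 hκ2 hx u hu.1)
  calc (∫ u in (0:ℝ)..T, (1 - Real.cos (x * u)) / u ^ κ)
      ≤ ∫ u in (0:ℝ)..T, x^2/2 * u ^ (2-κ) := h
    _ = x^2/2 * (T ^ (3-κ) / (3-κ)) := by
        rw [intervalIntegral.integral_const_mul, int1 κ T hκ1 hκ2 hT]

lemma large_bound (κ x T : ℝ) (hκ1 : 1 < κ) (hκ2 : κ < 2) (hx : 1 ≤ x) (hT : 0 < T)
    (hxT : 1 ≤ x * T) :
    (∫ u in (0:ℝ)..T, (1 - Real.cos (x * u)) / u ^ κ)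
      ≤ (1/(3-κ) + 2/(κ-1)) * x ^ (κ-1) := by
  have hx0 : (0:ℝ) < x := by linarith
  have hix : (0:ℝ) < 1/x := by positivity
  have hixT : 1/x ≤ T := by
    rw [div_le_iff₀ hx0]; nlinarith
  have h1 := f_int κ x (1/x) hκ1 hκ2 hx0 hix.le
  have h2 := f_int κ x T hκ1 hκ2 hx0 hT.le
  have hmid : IntervalIntegrable (fun u => (1 - Real.cos (x * u)) / u ^ κ) volume (1/x) T :=
    h1.symm.trans h2
  have hsplit := intervalIntegral.integral_add_adjacent_intervals h1 hmid
  have hA : (0:ℝ) ≤ x ^ (κ-1) := Real.rpow_nonneg hx0.le _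
  -- piece 1
  have e1 : (x:ℝ)^2 = x ^ ((2:ℝ)) := by rw [← Real.rpow_natCast x 2]; norm_num
  have einv : (1/x) ^ (3-κ) = x ^ (κ-3) := by
    rw [one_div, ← Real.rpow_neg_one x, ← Real.rpow_mul hx0.le,
      show (-1:ℝ)*(3-κ) = κ-3 by ring]
  have e2 : x ^ ((2:ℝ)) * x ^ (κ-3) = x ^ (κ-1) := by
    rw [← Real.rpow_add hx0, show (2:ℝ)+(κ-3) = κ-1 by ring]
  have p1 : (∫ u in (0:ℝ)..(1/x), (1 - Real.cos (x * u)) / u ^ κ)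
      ≤ x ^ (κ-1) / (2*(3-κ)) := by
    calc (∫ u in (0:ℝ)..(1/x), (1 - Real.cos (x * u)) / u ^ κ)
        ≤ x^2/2 * ((1/x) ^ (3-κ) / (3-κ)) := small_bound κ x (1/x) hκ1 hκ2 hx0 hix.le
      _ = x ^ ((2:ℝ)) * (1/x) ^ (3-κ) / (2*(3-κ)) := by
          rw [← e1]
          have hne : (3-κ:ℝ) ≠ 0 := by intro h; linarith
          field_simp
      _ = x ^ (κ-1) / (2*(3-κ)) := by rw [einv, e2]
  -- piece 2
  have hnm : (0:ℝ) ∉ Set.uIcc (1/x) T := by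
    rw [Set.uIcc_of_le hixT]; rintro ⟨ha, hb⟩; linarith
  have hg2 : IntervalIntegrable (fun u : ℝ => 2 * u ^ (-κ)) volume (1/x) T :=
    (intervalIntegrable_rpow (Or.inr hnm)).const_mul _
  have ptw2 : ∀ u ∈ Set.Icc (1/x) T,
      (1 - Real.cos (x * u)) / u ^ κ ≤ 2 * u ^ (-κ) := by
    intro u hu
    have hu0 : 0 < u := lt_of_lt_of_le hix hu.1
    rw [div_le_iff₀ (Real.rpow_pos_of_pos hu0 κ)]
    have : 2 * u ^ (-κ) * u ^ κ = 2 := by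
      rw [mul_assoc, ← Real.rpow_add hu0]; norm_num
    rw [this]
    have := Real.neg_one_le_cos (x*u)
    linarith
  have einv2 : (1/x) ^ (-κ+1) = x ^ (κ-1) := by
    rw [one_div, ← Real.rpow_neg_one x, ← Real.rpow_mul hx0.le,
      show (-1:ℝ)*(-κ+1) = κ-1 by ring]
  have hB : (0:ℝ) ≤ T ^ (-κ+1) := Real.rpow_nonneg hT.le _
  have p2 : (∫ u in (1/x)..T, (1 - Real.cos (x * u)) / u ^ κ)
      ≤ 2/(κ-1) * x ^ (κ-1) := by
    calc (∫ u in (1/x)..T, (1 - Real.cos (x * u)) / u ^ κ)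
        ≤ ∫ u in (1/x)..T, 2 * u ^ (-κ) :=
          intervalIntegral.integral_mono_on hixT hmid hg2 ptw2
      _ = 2 * ((T ^ (-κ+1) - x ^ (κ-1)) / (-κ+1)) := by
          rw [intervalIntegral.integral_const_mul,
            integral_rpow (Or.inr ⟨by intro h; rw [neg_eq_iff_eq_neg] at h; linarith, hnm⟩),
            einv2]
      _ = 2 * ((x ^ (κ-1) - T ^ (-κ+1)) / (κ-1)) := by
          have h1 : (-κ+1 : ℝ) ≠ 0 := by intro h; linarith
          have h2 : (κ-1 : ℝ) ≠ 0 := by intro h; linarith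
          field_simp
          ring
      _ ≤ 2 * (x ^ (κ-1) / (κ-1)) := by gcongr <;> linarith
      _ = 2/(κ-1) * x ^ (κ-1) := by ring
  have hfrac : x ^ (κ-1) / (2*(3-κ)) ≤ 1/(3-κ) * x ^ (κ-1) := by
    have h13 : (0:ℝ) < 3-κ := by linarith
    have h := one_div_le_one_div_of_le h13 (by linarith : 3-κ ≤ 2*(3-κ))
    have h' := mul_le_mul_of_nonneg_right h hA
    calc x ^ (κ-1) / (2*(3-κ)) = 1/(2*(3-κ)) * x ^ (κ-1) := by ring
      _ ≤ 1/(3-κ) * x ^ (κ-1) := h'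
  linarith [hsplit, p1, p2]

end AuxStmt1

/-- For `1 < κ < 2` and `θ ∈ [0, 3-κ]` there is a constant `C` (depending only on
`κ` and `θ`) such that for all `T > 0` and `x ≥ 1`:
if `xT ≥ 1` then `∫₀^T (1-cos(xu))/u^κ du ≤ C·x^(κ-1) ≤ C·x^(κ-1)(xT)^θ`, while if
`xT < 1` then the integral is `≤ C·x^(κ-1)(xT)^(3-κ) ≤ C·x^(κ-1)(xT)^θ`; in
particular the integral is always `≤ C·x^(θ+κ-1)·T^θ`. -/
theorem stmt1 (κ θ : ℝ) (hκ1 : 1 < κ) (hκ2 : κ < 2) (hθ0 : 0 ≤ θ) (hθκ : θ ≤ 3 - κ) :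
    ∃ C > 0, ∀ T x : ℝ, 0 < T → 1 ≤ x →
      ((1 ≤ x * T →
          (∫ u in (0:ℝ)..T, (1 - Real.cos (x * u)) / u ^ κ) ≤ C * x ^ (κ - 1) ∧
          C * x ^ (κ - 1) ≤ C * x ^ (κ - 1) * (x * T) ^ θ) ∧
       (x * T < 1 →
          (∫ u in (0:ℝ)..T, (1 - Real.cos (x * u)) / u ^ κ)
            ≤ C * x ^ (κ - 1) * (x * T) ^ (3 - κ) ∧
          C * x ^ (κ - 1) * (x * T) ^ (3 - κ) ≤ C * x ^ (κ - 1) * (x * T) ^ θ) ∧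
       (∫ u in (0:ℝ)..T, (1 - Real.cos (x * u)) / u ^ κ) ≤ C * x ^ (θ + κ - 1) * T ^ θ) := by
  set C := 1/(3-κ) + 2/(κ-1) with hC
  have h13 : (0:ℝ) < 3-κ := by linarith
  have hκ1' : (0:ℝ) < κ-1 := by linarith
  have hCpos : 0 < C := by
    have : (0:ℝ) < 1/(3-κ) := by positivity
    have : (0:ℝ) < 2/(κ-1) := by positivity
    rw [hC]; linarith
  refine ⟨C, hCpos, fun T x hT hx => ?_⟩
  have hx0 : (0:ℝ) < x := by linarith
  have hA : (0:ℝ) ≤ x ^ (κ-1) := Real.rpow_nonneg hx0.le _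
  have hxT0 : (0:ℝ) < x * T := by positivity
  -- key rewrites
  have e1 : (x:ℝ)^2 = x ^ ((2:ℝ)) := by rw [← Real.rpow_natCast x 2]; norm_num
  have emul : (x*T) ^ (3-κ) = x ^ (3-κ) * T ^ (3-κ) := Real.mul_rpow hx0.le hT.le
  have e2 : x ^ (κ-1) * x ^ (3-κ) = x ^ ((2:ℝ)) := by
    rw [← Real.rpow_add hx0, show (κ-1)+(3-κ) = (2:ℝ) by ring]
  -- large-case bound
  have hlarge : 1 ≤ x*T →
      (∫ u in (0:ℝ)..T, (1 - Real.cos (x * u)) / u ^ κ) ≤ C * x ^ (κ-1) ∧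
      C * x ^ (κ-1) ≤ C * x ^ (κ-1) * (x * T) ^ θ := by
    intro hxT
    constructor
    · exact large_bound κ x T hκ1 hκ2 hx hT hxT
    · have h1 : (1:ℝ) ≤ (x*T) ^ θ := by
        have := Real.rpow_le_rpow_of_exponent_le hxT hθ0
        rwa [Real.rpow_zero] at this
      nlinarith [mul_nonneg hCpos.le hA]
  -- small-case bound
  have hsmall : x*T < 1 →
      (∫ u in (0:ℝ)..T, (1 - Real.cos (x * u)) / u ^ κ)
        ≤ C * x ^ (κ-1) * (x*T) ^ (3-κ) ∧
      C * x ^ (κ-1) * (x*T) ^ (3-κ) ≤ C * x ^ (κ-1) * (x*T) ^ θ := by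
    intro hxT
    constructor
    · calc (∫ u in (0:ℝ)..T, (1 - Real.cos (x * u)) / u ^ κ)
          ≤ x^2/2 * (T ^ (3-κ) / (3-κ)) := small_bound κ x T hκ1 hκ2 hx0 hT.le
        _ = 1/(2*(3-κ)) * (x ^ (κ-1) * (x*T) ^ (3-κ)) := by
            rw [emul]
            have he : x ^ (κ-1) * (x ^ (3-κ) * T ^ (3-κ)) = x ^ ((2:ℝ)) * T ^ (3-κ) := by
              rw [← mul_assoc, e2]
            rw [he, ← e1]
            have hne : (3-κ:ℝ) ≠ 0 := by intro h; linarith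
            field_simp
        _ ≤ C * (x ^ (κ-1) * (x*T) ^ (3-κ)) := by
            apply mul_le_mul_of_nonneg_right _
              (mul_nonneg hA (Real.rpow_nonneg hxT0.le _))
            have h := one_div_le_one_div_of_le h13 (by linarith : 3-κ ≤ 2*(3-κ))
            have h2 : (0:ℝ) < 2/(κ-1) := by positivity
            rw [hC]; linarith
        _ = C * x ^ (κ-1) * (x*T) ^ (3-κ) := by ring
    · have h1 : (x*T) ^ (3-κ) ≤ (x*T) ^ θ :=
        Real.rpow_le_rpow_of_exponent_ge hxT0 hxT.le hθκ
      have := mul_le_mul_of_nonneg_left h1 (mul_nonneg hCpos.le hA)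
      linarith [this]
  refine ⟨hlarge, hsmall, ?_⟩
  have e3 : C * x ^ (θ+κ-1) * T ^ θ = C * x ^ (κ-1) * (x*T) ^ θ := by
    rw [Real.mul_rpow hx0.le hT.le, show θ+κ-1 = (κ-1)+θ by ring, Real.rpow_add hx0]
    ring
  rw [e3]
  rcases le_or_gt 1 (x*T) with h | h
  · obtain ⟨ha, hb⟩ := hlarge h
    exact ha.trans hb
  · obtain ⟨ha, hb⟩ := hsmall h
    exact ha.trans hb
end

section
/- For any T > 0 and x ≥ 1 with xT ≥ e, the integral ∫₀^T (1 - cos(xu))/u du is at most C·log(xT) for an absolute constant C. -/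
/-!
Substituting `v = x u` turns the integral into `∫₀^{xT} (1 - cos v)/v dv`. Split it at `v = 1`:
on `[0, 1]` the integrand is at most `v/2` since `1 - cos v ≤ v²/2`, contributing at most `1/4`;
on `[1, xT]` it is at most `2/v`, contributing at most `2 log(xT)`. As `log(xT) ≥ 1`, the total
is at most `3 log(xT)`.
-/

open MeasureTheory Real

lemma abs_one_sub_cos_div_le (v : ℝ) : |(1 - cos v) / v| ≤ |v| / 2 := by
  rcases eq_or_ne v 0 with rfl | hv
  · simp
  have hsq : 1 - cos v ≤ |v| ^ 2 / 2 := by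
    rw [sq_abs]
    linarith [one_sub_sq_div_two_le_cos (x := v)]
  rw [abs_div, abs_of_nonneg (sub_nonneg.mpr (cos_le_one v)), div_le_iff₀ (abs_pos.mpr hv)]
  linarith

lemma intervalIntegrable_one_sub_cos_div (a b : ℝ) :
    IntervalIntegrable (fun v => (1 - cos v) / v) volume a b :=
  ((continuous_abs.div_const 2).intervalIntegrable a b).mono_fun
    ((measurable_const.sub measurable_cos).div measurable_id).aestronglyMeasurable
    (ae_of_all _ fun v => by
      simpa only [norm_eq_abs, abs_div, abs_abs, abs_two] using abs_one_sub_cos_div_le v)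

lemma integral_zero_one_one_sub_cos_div_le : ∫ v in (0 : ℝ)..1, (1 - cos v) / v ≤ 1 / 4 := by
  calc ∫ v in (0 : ℝ)..1, (1 - cos v) / v
      ≤ ∫ v in (0 : ℝ)..1, v / 2 := by
        refine intervalIntegral.integral_mono_on zero_le_one
          (intervalIntegrable_one_sub_cos_div 0 1) ((continuous_id.div_const 2).intervalIntegrable 0 1)
          fun v hv => ?_
        have h := (le_abs_self _).trans (abs_one_sub_cos_div_le v)
        rwa [abs_of_nonneg hv.1] at h
    _ = 1 / 4 := by
        rw [intervalIntegral.integral_div, integral_id]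
        norm_num

lemma integral_one_one_sub_cos_div_le {S : ℝ} (hS : 1 ≤ S) :
    ∫ v in (1 : ℝ)..S, (1 - cos v) / v ≤ 2 * log S := by
  have hinv : ContinuousOn (fun v : ℝ => 2 * v⁻¹) (Set.uIcc 1 S) :=
    continuousOn_const.mul <| continuousOn_inv₀.mono fun v hv => by
      rw [Set.uIcc_of_le hS] at hv
      exact (zero_lt_one.trans_le hv.1).ne'
  calc ∫ v in (1 : ℝ)..S, (1 - cos v) / v
      ≤ ∫ v in (1 : ℝ)..S, 2 * v⁻¹ := by
        refine intervalIntegral.integral_mono_on hS (intervalIntegrable_one_sub_cos_div 1 S)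
          hinv.intervalIntegrable fun v hv => ?_
        rw [← div_eq_mul_inv]
        exact div_le_div_of_nonneg_right (by linarith [neg_one_le_cos v])
          (zero_le_one.trans hv.1)
    _ = 2 * log S := by
        rw [intervalIntegral.integral_const_mul, integral_inv_of_pos one_pos (by linarith), div_one]

lemma integral_one_sub_cos_div_le {S : ℝ} (hS : 1 ≤ S) :
    ∫ v in (0 : ℝ)..S, (1 - cos v) / v ≤ 1 / 4 + 2 * log S := by
  rw [← intervalIntegral.integral_add_adjacent_intervals
    (intervalIntegrable_one_sub_cos_div 0 1) (intervalIntegrable_one_sub_cos_div 1 S)]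
  exact add_le_add integral_zero_one_one_sub_cos_div_le (integral_one_one_sub_cos_div_le hS)

lemma integral_one_sub_cos_mul_div {x : ℝ} (hx : x ≠ 0) (T : ℝ) :
    ∫ u in (0 : ℝ)..T, (1 - cos (x * u)) / u = ∫ v in (0 : ℝ)..x * T, (1 - cos v) / v := by
  have hscale : ∀ u, (1 - cos (x * u)) / u = x * ((1 - cos (x * u)) / (x * u)) := fun u => by
    rcases eq_or_ne u 0 with rfl | hu
    · simp
    · field_simp
  simp_rw [hscale, intervalIntegral.integral_const_mul,
    intervalIntegral.integral_comp_mul_left (fun v => (1 - cos v) / v) hx, mul_zero, smul_eq_mul,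
    mul_inv_cancel_left₀ hx]

/-- There is an absolute constant `C` such that for any `T > 0` and `x ≥ 1` with
`xT ≥ e`, `∫₀^T (1 - cos(xu))/u du ≤ C · log(xT)`. -/
theorem stmt2 :
    ∃ C > 0, ∀ T x : ℝ, 0 < T → 1 ≤ x → Real.exp 1 ≤ x * T →
      (∫ u in (0:ℝ)..T, (1 - Real.cos (x * u)) / u) ≤ C * Real.log (x * T) := by
  refine ⟨3, by norm_num, fun T x _ hx hxT => ?_⟩
  have hxT_one : 1 ≤ x * T := (one_le_exp zero_le_one).trans hxT
  have hlog : 1 ≤ log (x * T) := by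
    simpa only [log_exp] using log_le_log (exp_pos 1) hxT
  rw [integral_one_sub_cos_mul_div (by positivity) T]
  linarith [integral_one_sub_cos_div_le hxT_one]
end

section
/- Let X be a rate-1 continuous-time random walk on ℤ with symmetric jump kernel p, p(0)=0. Then for all t > 0, |d/dt P(X_t = 0)| ≤ t^{-1} · P(X_{t/2} = 0). -/
open MeasureTheory Real

/-!
Differentiating the Fourier representation under the integral sign gives
`P'(t) = (2π)⁻¹ ∫ -(1 - φ u) e^{-t(1 - φ u)} du`, where `1 - φ ≥ 0`. Since `x e^{-x/2} ≤ 2/e < 1`,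
we have `y e^{-ty} ≤ t⁻¹ e^{-ty/2}` for every real `y`, and integrating this bound gives `t⁻¹ P(t/2)`.
-/

lemma mul_exp_neg_mul_le_inv_mul_exp_neg_half_mul (y : ℝ) {t : ℝ} (ht : 0 < t) :
    y * exp (-t * y) ≤ t⁻¹ * exp (-(t / 2) * y) := by
  have hmax : t * y * exp (-(t * y / 2)) ≤ 1 := by
    have := mul_exp_neg_le_exp_neg_one (t * y / 2)
    nlinarith [exp_neg_one_lt_half]
  calc y * exp (-t * y)
      = t⁻¹ * (t * y * exp (-(t * y / 2))) * exp (-(t / 2) * y) := by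
        have : exp (-t * y) = exp (-(t * y / 2)) * exp (-(t / 2) * y) := by
          rw [← exp_add]; ring_nf
        rw [this]
        field_simp
    _ ≤ t⁻¹ * 1 * exp (-(t / 2) * y) := by gcongr
    _ = t⁻¹ * exp (-(t / 2) * y) := by rw [mul_one]

section LaplaceTransform

variable {g : ℝ → ℝ} {a b t : ℝ}

lemma hasDerivAt_intervalIntegral_exp_neg_mul (hg : Continuous g) (hg0 : ∀ u, 0 ≤ g u)
    (ht : 0 < t) :
    HasDerivAt (fun s => ∫ u in a..b, exp (-s * g u))
      (∫ u in a..b, -g u * exp (-t * g u)) t := by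
  have hF : ∀ s, Continuous fun u => exp (-s * g u) := by fun_prop
  have hF' : ∀ s, Continuous fun u => -g u * exp (-s * g u) := by fun_prop
  refine (intervalIntegral.hasDerivAt_integral_of_dominated_loc_of_deriv_le
    (F := fun s u => exp (-s * g u)) (F' := fun s u => -g u * exp (-s * g u)) (bound := g)
    (Ioi_mem_nhds ht)
    (.of_forall fun s => (hF s).aestronglyMeasurable.restrict)
    ((hF t).intervalIntegrable _ _) (hF' t).aestronglyMeasurable.restrict
    (.of_forall fun u _ s (hs : 0 < s) => ?_) (hg.intervalIntegrable _ _)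
    (.of_forall fun u _ s _ => ?_)).2
  · rw [norm_mul, norm_neg, norm_of_nonneg (hg0 u), norm_of_nonneg (exp_pos _).le]
    refine mul_le_of_le_one_right (hg0 u) (exp_le_one_iff.2 ?_)
    nlinarith [hg0 u]
  · exact ((hasDerivAt_neg s).mul_const (g u)).exp.congr_deriv (by ring)

lemma abs_intervalIntegral_mul_exp_neg_mul_le (hab : a ≤ b) (hg : Continuous g)
    (hg0 : ∀ u, 0 ≤ g u) (ht : 0 < t) :
    |∫ u in a..b, -g u * exp (-t * g u)| ≤ t⁻¹ * ∫ u in a..b, exp (-(t / 2) * g u) := by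
  rw [← intervalIntegral.integral_const_mul]
  refine (intervalIntegral.abs_integral_le_integral_abs hab).trans
    (intervalIntegral.integral_mono_on hab (Continuous.intervalIntegrable (by fun_prop) _ _)
      (Continuous.intervalIntegrable (by fun_prop) _ _) fun u _ => ?_)
  rw [abs_mul, abs_neg, abs_of_nonneg (hg0 u), abs_of_pos (exp_pos _)]
  exact mul_exp_neg_mul_le_inv_mul_exp_neg_half_mul (g u) ht

end LaplaceTransform

section CharacteristicFunction

variable {p : ℤ → ℝ}

lemma norm_mul_cos_le (hpnn : ∀ z, 0 ≤ p z) (u : ℝ) (x : ℤ) : ‖p x * cos (u * x)‖ ≤ p x := by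
  rw [norm_mul, norm_of_nonneg (hpnn x)]
  exact mul_le_of_le_one_right (hpnn x) (abs_cos_le_one _)

lemma continuous_tsum_mul_cos (hpnn : ∀ z, 0 ≤ p z) (hp : Summable p) :
    Continuous fun u : ℝ => ∑' x : ℤ, p x * cos (u * x) :=
  continuous_tsum (fun x => by fun_prop) hp fun x u => norm_mul_cos_le hpnn u x

lemma tsum_mul_cos_le_tsum (hpnn : ∀ z, 0 ≤ p z) (hp : Summable p) (u : ℝ) :
    ∑' x : ℤ, p x * cos (u * x) ≤ ∑' x : ℤ, p x :=
  (hp.of_norm_bounded (norm_mul_cos_le hpnn u)).tsum_le_tsum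
    (fun x => mul_le_of_le_one_right (hpnn x) (cos_le_one _)) hp

end CharacteristicFunction

theorem stmt6_general (p : ℤ → ℝ) (hpnn : ∀ z, 0 ≤ p z)
    (hpsum : ∑' z : ℤ, p z = 1)
    (φ : ℝ → ℝ) (hφ : ∀ u : ℝ, φ u = ∑' x : ℤ, p x * Real.cos (u * x))
    (P : ℝ → ℝ)
    (hP : ∀ t : ℝ, 0 < t →
      P t = (2 * π)⁻¹ * ∫ u in (-π)..π, Real.exp (-t * (1 - φ u))) :
    ∀ t : ℝ, 0 < t → |deriv P t| ≤ t⁻¹ * P (t / 2) := by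
  intro t ht
  have hp : Summable p := by
    by_contra h
    simp [tsum_eq_zero_of_not_summable h] at hpsum
  obtain rfl : φ = fun u => ∑' x : ℤ, p x * cos (u * x) := funext hφ
  have hg : Continuous fun u => 1 - ∑' x : ℤ, p x * cos (u * x) :=
    continuous_const.sub (continuous_tsum_mul_cos hpnn hp)
  have hg0 (u : ℝ) : 0 ≤ 1 - ∑' x : ℤ, p x * cos (u * x) :=
    sub_nonneg.2 (hpsum ▸ tsum_mul_cos_le_tsum hpnn hp u)
  have hderiv := ((hasDerivAt_intervalIntegral_exp_neg_mul (a := -π) (b := π) hg hg0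
    ht).const_mul (2 * π)⁻¹).congr_of_eventuallyEq
      (Filter.eventually_of_mem (Ioi_mem_nhds ht) hP)
  rw [hderiv.deriv, abs_mul, abs_of_pos (by positivity), hP (t / 2) (half_pos ht),
    mul_left_comm]
  gcongr
  exact abs_intervalIntegral_mul_exp_neg_mul_le (by linarith [pi_pos]) hg hg0 ht

/-- Let `X` be a rate-1 continuous-time random walk on `ℤ` with symmetric jump
kernel `p`, `p(0)=0`, so that by Fourier inversion
`P(X_t = 0) = (1/2π) ∫_{-π}^{π} exp(−t(1−φ(u))) du` where
`φ(u) = Σ_x p(x) cos(ux)` is the (real) characteristic function of `p`.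
Then for all `t > 0`, `|d/dt P(X_t = 0)| ≤ t⁻¹ · P(X_{t/2} = 0)`. -/
theorem stmt6 (p : ℤ → ℝ) (hp0 : p 0 = 0) (hpnn : ∀ z, 0 ≤ p z)
    (hpsum : ∑' z : ℤ, p z = 1) (hpsymm : ∀ z, p (-z) = p z)
    (φ : ℝ → ℝ) (hφ : ∀ u : ℝ, φ u = ∑' x : ℤ, p x * Real.cos (u * x))
    (P : ℝ → ℝ)
    (hP : ∀ t : ℝ, 0 < t →
      P t = (2 * π)⁻¹ * ∫ u in (-π)..π, Real.exp (-t * (1 - φ u))) :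
    ∀ t : ℝ, 0 < t → |deriv P t| ≤ t⁻¹ * P (t / 2) :=
  stmt6_general p hpnn hpsum φ hφ P hP
end
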